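/- arXiv:2602.04778 — 2 statements merged into one kernel-verified Lean document; each statement's English description precedes it below -/
import Mathlib

section
/- Let R be a complete Noetherian local ring with maximal ideal m and residue field k, Γ a group, and ρ : Γ → GL_n(R) a homomorphism such that ρ mod m is absolutely irreducible. Then the centralizer of ρ in the group {C ∈ GL_n(R) : C ≡ 1 mod m} consists of scalar matrices λ·1 with λ ∈ 1 + m. -/
open Matrix IsLocalRing

/-- A representation into `n × n` matrices over a field is absolutely irreducible iff the
linear span of its image is the full matrix algebra (Burnside). -/
def AbsIrred {k : Type*} [Field k] {n : ℕ} {Γ : Type*}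
    (ρ : Γ → Matrix (Fin n) (Fin n) k) : Prop :=
  Submodule.span k (Set.range ρ) = (⊤ : Submodule k (Matrix (Fin n) (Fin n) k))

/-- A matrix all of whose entries lie in an ideal `I` lies in `I • ⊤`. -/
lemma mem_ideal_smul_top_of_entries {R : Type*} [CommRing R] {n : ℕ} (I : Ideal R)
    (A : Matrix (Fin n) (Fin n) R) (h : ∀ i j, A i j ∈ I) :
    A ∈ I • (⊤ : Submodule R (Matrix (Fin n) (Fin n) R)) := by
  rw [matrix_eq_sum_single A]
  refine Submodule.sum_mem _ fun i _ => Submodule.sum_mem _ fun j _ => ?_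
  have : Matrix.single i j (A i j) = A i j • Matrix.single i j (1 : R) := by
    ext a b
    simp [Matrix.single, mul_ite]
  rw [this]
  exact Submodule.smul_mem_smul (h i j) trivial

/-- if `ρ : Γ → GL_n(R)` over a complete Noetherian local ring has absolutely
irreducible residual reduction, then any `C ∈ GL_n(R)` with `C ≡ 1 mod m` commuting with
the image of `ρ` is a scalar `λ·1` with `λ ∈ 1 + m`. -/
theorem centralizer_of_residually_irreducible_is_scalar
    (R : Type*) [CommRing R] [IsNoetherianRing R] [IsLocalRing R]
    [IsAdicComplete (IsLocalRing.maximalIdeal R) R]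
    (n : ℕ) (Γ : Type*) [Group Γ]
    (ρ : Γ →* (Matrix (Fin n) (Fin n) R)ˣ)
    (hirr : AbsIrred (fun g : Γ => ((ρ g : Matrix (Fin n) (Fin n) R)).map (IsLocalRing.residue R)))
    (C : (Matrix (Fin n) (Fin n) R)ˣ)
    (hC1 : ((C : Matrix (Fin n) (Fin n) R)).map (IsLocalRing.residue R) = 1)
    (hcomm : ∀ g : Γ, (C : Matrix (Fin n) (Fin n) R) * (ρ g : Matrix (Fin n) (Fin n) R)
      = (ρ g : Matrix (Fin n) (Fin n) R) * (C : Matrix (Fin n) (Fin n) R)) :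
    ∃ lam : R, (C : Matrix (Fin n) (Fin n) R) = lam • (1 : Matrix (Fin n) (Fin n) R) ∧
      IsLocalRing.residue R lam = 1 := by
  classical
  rcases Nat.eq_zero_or_pos n with hn | hn
  · subst hn
    exact ⟨1, Subsingleton.elim _ _, map_one _⟩
  -- The span of the image of ρ is everything, by Nakayama and residual irreducibility.
  set S : Set (Matrix (Fin n) (Fin n) R) :=
    Set.range (fun g : Γ => (ρ g : Matrix (Fin n) (Fin n) R)) with hS
  have hspan : Submodule.span R S = ⊤ := by
    rw [eq_top_iff]
    refine Submodule.le_of_le_smul_of_le_jacobson_bot (I := maximalIdeal R)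
      (IsNoetherian.noetherian ⊤)
      (le_of_eq (IsLocalRing.jacobson_eq_maximalIdeal ⊥ bot_ne_top).symm) ?_
    intro A _
    -- reduce A mod m; it is a k-combination of reductions of the ρ g
    have hA : A.map (residue R) ∈ Submodule.span (ResidueField R)
        (Set.range (fun g : Γ => ((ρ g : Matrix (Fin n) (Fin n) R)).map (residue R))) := by
      rw [hirr]; trivial
    obtain ⟨cf, hsupp, hsum⟩ := Submodule.mem_span_set.mp hA
    -- choose lifts of the coefficients and of the group elements
    have hgx : ∀ x ∈ cf.support, ∃ γ : Γ,
        ((ρ γ : Matrix (Fin n) (Fin n) R)).map (residue R) = x := fun x hx => hsupp hx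
    choose! g hg using hgx
    choose lift hlift using fun a : ResidueField R =>
      Ideal.Quotient.mk_surjective (I := maximalIdeal R) a
    have hlift' : ∀ a : ResidueField R, residue R (lift a) = a := hlift
    set B : Matrix (Fin n) (Fin n) R :=
      ∑ x ∈ cf.support, lift (cf x) • (ρ (g x) : Matrix (Fin n) (Fin n) R) with hB
    have hBmem : B ∈ Submodule.span R S := by
      exact Submodule.sum_mem _ fun x _ => Submodule.smul_mem _ _
        (Submodule.subset_span ⟨g x, rfl⟩)
    have hAB : ∀ i j, A i j - B i j ∈ maximalIdeal R := by
      intro i j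
      have hentry : residue R (A i j) = residue R (B i j) := by
        have h1 : residue R (B i j) = ∑ x ∈ cf.support, cf x * (x i j) := by
          rw [hB]
          rw [Matrix.sum_apply]
          simp only [Matrix.smul_apply, smul_eq_mul, map_sum, _root_.map_mul]
          refine Finset.sum_congr rfl fun x hx => ?_
          rw [hlift']
          congr 1
          have := congrArg (fun M => M i j) (hg x hx)
          simpa [Matrix.map_apply] using this
        have h2 : residue R (A i j) = ∑ x ∈ cf.support, cf x * (x i j) := by
          have := congrArg (fun M => M i j) hsum
          rw [Finsupp.sum] at this
          simp only [Matrix.sum_apply, Matrix.smul_apply, smul_eq_mul] at this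
          rw [this]
          rfl
        rw [h1, h2]
      have : residue R (A i j - B i j) = 0 := by
        rw [map_sub, hentry, sub_self]
      exact (Ideal.Quotient.eq_zero_iff_mem).mp this
    have : A = B + (A - B) := by abel
    rw [this]
    exact Submodule.add_mem _ (Submodule.mem_sup_left hBmem)
      (Submodule.mem_sup_right (mem_ideal_smul_top_of_entries _ _ fun i j => by
        simpa [Matrix.sub_apply] using hAB i j))
  -- Hence C commutes with every matrix.
  have hall : ∀ X : Matrix (Fin n) (Fin n) R,
      (C : Matrix (Fin n) (Fin n) R) * X = X * (C : Matrix (Fin n) (Fin n) R) := by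
    intro X
    have hX : X ∈ Submodule.span R S := hspan ▸ Submodule.mem_top
    induction hX using Submodule.span_induction with
    | mem x hx => obtain ⟨g, rfl⟩ := hx; exact hcomm g
    | zero => simp
    | add x y _ _ hx hy => rw [mul_add, add_mul, hx, hy]
    | smul r x _ hx => rw [mul_smul_comm, smul_mul_assoc, hx]
  obtain ⟨r, hr⟩ := Matrix.mem_range_scalar_of_commute_single
    (M := (C : Matrix (Fin n) (Fin n) R)) (fun i j _ => (hall _).symm)
  refine ⟨r, ?_, ?_⟩
  · rw [← hr]
    ext i j
    simp [Matrix.scalar_apply, Matrix.smul_apply, Matrix.one_apply, Matrix.diagonal_apply,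
      mul_ite, mul_one, mul_zero, smul_eq_mul]
  · have i0 : Fin n := ⟨0, hn⟩
    have := congrArg (fun M => M i0 i0) hC1
    simp only [Matrix.map_apply, Matrix.one_apply_eq] at this
    rw [← hr] at this
    simpa [Matrix.scalar_apply] using this
end

section
/- Let R' ⊆ R be complete Noetherian local rings with maximal ideals m' and m satisfying m ∩ R' = m' and with equal residue fields. Let Γ be a profinite group, ρ : Γ → GL_n(R) a continuous representation whose reduction mod m is absolutely irreducible, and suppose tr ρ(γ) ∈ R' for all γ ∈ Γ. If moreover ρ preserves a perfect bilinear form up to a similitude character ν with ν(Γ) ⊆ (R')^×, and ρ' is the Carayol descent of ρ to GL_n(R'), then ρ' also preserves a perfect bilinear form of the same type (symmetric or alternating) with similitude ν, defined over R'. -/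
open Matrix IsLocalRing

/-!
Transporting `J` along the conjugation `ρ' = C ρ C⁻¹` gives a form `M` preserved by `ρ'` with
similitude `ν`, so `M ρ'(g) M⁻¹ = ν(g) ρ'(g⁻¹)ᵀ` has entries in `R'`. Since the residue fields
agree and the reduction is absolutely irreducible, Nakayama's lemma shows that `ρ'(Γ)` spans
`M_n(R')` over `R'`; hence conjugation by `M` preserves `M_n(R')`. After rescaling `M` so that
some entry `M i₀ j₀` is `1`, the entries `(M E_{j₀ b} M⁻¹) i₀ j = (M⁻¹) b j` show that `M⁻¹` is
defined over `R'`, and then so is `M`, because `R' → R` is a local homomorphism.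
-/

section

variable {R : Type*} [CommRing R]

namespace Matrix

variable {ι : Type*} [Fintype ι] [DecidableEq ι]

lemma mul_single_mul_apply {α : Type*} [Semiring α] (A B : Matrix ι ι α) (a b i j : ι) (c : α) :
    (A * single a b c * B) i j = A i a * c * B b j := by
  simp [Matrix.mul_apply, single_apply, ite_and, Finset.sum_ite_eq]

lemma exists_isUnit_apply_of_isUnit [IsLocalRing R] [Nonempty ι] {M : Matrix ι ι R}
    (hM : IsUnit M) : ∃ i j, IsUnit (M i j) := by
  by_contra! h
  have hzero : M.map (residue R) = 0 := by
    ext i j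
    exact (residue_eq_zero_iff _).mpr (h i j)
  have := hM.map (residue R).mapMatrix
  rw [RingHom.mapMatrix_apply, hzero] at this
  exact not_isUnit_zero this

lemma transpose_conj_mul_mul_conj_eq_smul (C : (Matrix ι ι R)ˣ) {P J : Matrix ι ι R} {c : R}
    (h : Pᵀ * J * P = c • J) :
    ((C : Matrix ι ι R) * P * (↑C⁻¹ : Matrix ι ι R))ᵀ *
        ((↑C⁻¹ : Matrix ι ι R)ᵀ * J * (↑C⁻¹ : Matrix ι ι R)) *
        ((C : Matrix ι ι R) * P * (↑C⁻¹ : Matrix ι ι R)) =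
      c • ((↑C⁻¹ : Matrix ι ι R)ᵀ * J * (↑C⁻¹ : Matrix ι ι R)) := by
  have hCT : (C : Matrix ι ι R)ᵀ * (↑C⁻¹ : Matrix ι ι R)ᵀ = 1 := by
    rw [← transpose_mul, C.inv_mul, transpose_one]
  calc _ = (↑C⁻¹ : Matrix ι ι R)ᵀ * (Pᵀ * J * P) * (↑C⁻¹ : Matrix ι ι R) := by
        simp only [transpose_mul, Matrix.mul_assoc]
        rw [← Matrix.mul_assoc (C : Matrix ι ι R)ᵀ, hCT, Matrix.one_mul,
          Units.inv_mul_cancel_left]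
    _ = _ := by rw [h, Matrix.mul_smul, Matrix.smul_mul]

lemma mul_mul_nonsing_inv_eq_smul_transpose {M P : Matrix ι ι R} (hM : IsUnit M.det)
    (hP : IsUnit P.det) {c : R} (h : Pᵀ * M * P = c • M) : M * P * M⁻¹ = c • P⁻¹ᵀ := by
  have hPT : P⁻¹ᵀ * Pᵀ = 1 := by rw [← transpose_mul, mul_nonsing_inv _ hP, transpose_one]
  calc M * P * M⁻¹ = P⁻¹ᵀ * (Pᵀ * M * P) * M⁻¹ := by
        rw [Matrix.mul_assoc Pᵀ, ← Matrix.mul_assoc P⁻¹ᵀ, hPT, Matrix.one_mul]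
    _ = c • P⁻¹ᵀ := by
        rw [h, Matrix.mul_smul, Matrix.smul_mul, Matrix.mul_assoc, mul_nonsing_inv _ hM,
          Matrix.mul_one]

end Matrix

lemma AbsIrred.conj {k : Type*} [Field k] {n : ℕ} {Γ : Type*}
    {ρ : Γ → Matrix (Fin n) (Fin n) k} (h : AbsIrred ρ) (C : (Matrix (Fin n) (Fin n) k)ˣ) :
    AbsIrred fun g => (C : Matrix (Fin n) (Fin n) k) * ρ g * (↑C⁻¹ : Matrix (Fin n) (Fin n) k) := by
  let L := LinearMap.mulRight k (↑C⁻¹ : Matrix (Fin n) (Fin n) k) ∘ₗ LinearMap.mulLeft k ↑C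
  have hL : Function.Surjective L := fun Y =>
    ⟨(↑C⁻¹ : Matrix (Fin n) (Fin n) k) * Y * C, by simp [L, Matrix.mul_assoc]⟩
  change Submodule.span k (Set.range (L ∘ ρ)) = ⊤
  rw [Set.range_comp, Submodule.span_image, h, Submodule.map_top, LinearMap.range_eq_top.mpr hL]

namespace Subring

def matrixSubmodule (R' : Subring R) (m n : Type*) : Submodule R' (Matrix m n R) where
  carrier := {X | ∀ i j, X i j ∈ R'}
  add_mem' hX hY i j := add_mem (hX i j) (hY i j)
  zero_mem' _ _ := zero_mem R'
  smul_mem' c _ hX i j := mul_mem c.2 (hX i j)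

variable {R' : Subring R} {m n : Type*}

@[simp]
lemma mem_matrixSubmodule {X : Matrix m n R} : X ∈ R'.matrixSubmodule m n ↔ ∀ i j, X i j ∈ R' :=
  Iff.rfl

lemma single_mem_matrixSubmodule [DecidableEq m] [DecidableEq n] (i : m) (j : n) {a : R}
    (ha : a ∈ R') : single i j a ∈ R'.matrixSubmodule m n := by
  intro i' j'
  by_cases h : i = i' ∧ j = j' <;> simp [h, ha, zero_mem]

lemma matrixSubmodule_eq_range :
    R'.matrixSubmodule m n = LinearMap.range (Algebra.linearMap R' R).mapMatrix := by
  ext X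
  refine ⟨fun hX => ⟨fun i j => ⟨X i j, hX i j⟩, rfl⟩, ?_⟩
  rintro ⟨Y, rfl⟩ i j
  exact (Y i j).2

lemma fg_matrixSubmodule [Finite m] [Finite n] : (R'.matrixSubmodule m n).FG := by
  rw [matrixSubmodule_eq_range, LinearMap.range_eq_map]
  exact Module.Finite.fg_top.map _

lemma mem_smul_matrixSubmodule [Fintype m] [Fintype n] [DecidableEq m] [DecidableEq n]
    (I : Ideal R) {X : Matrix m n R} (hX : X ∈ R'.matrixSubmodule m n) (hI : ∀ i j, X i j ∈ I) :
    X ∈ I.comap R'.subtype • R'.matrixSubmodule m n := by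
  rw [matrix_eq_sum_single X]
  refine Submodule.sum_mem _ fun i _ => Submodule.sum_mem _ fun j _ => ?_
  have hsingle : single i j (X i j) = (⟨X i j, hX i j⟩ : R') • single i j (1 : R) := by
    rw [Subring.smul_def, smul_single, smul_eq_mul, mul_one]
  rw [hsingle]
  exact Submodule.smul_mem_smul (hI i j) (single_mem_matrixSubmodule i j R'.one_mem)

lemma exists_mem_span_map_residue_eq [IsLocalRing R]
    (hres : Function.Surjective fun x : R' => residue R x) {S : Set (Matrix m n R)}
    {Z : Matrix m n (ResidueField R)}
    (hZ : Z ∈ Submodule.span (ResidueField R) ((Matrix.map · (residue R)) '' S)) :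
    ∃ Y ∈ Submodule.span R' S, Y.map (residue R) = Z := by
  induction hZ using Submodule.span_induction with
  | mem _ h =>
    obtain ⟨s, hs, rfl⟩ := h
    exact ⟨s, Submodule.subset_span hs, rfl⟩
  | zero => exact ⟨0, zero_mem _, Matrix.map_zero _ (map_zero _)⟩
  | add _ _ _ _ h₁ h₂ =>
    obtain ⟨Y₁, hY₁, rfl⟩ := h₁
    obtain ⟨Y₂, hY₂, rfl⟩ := h₂
    exact ⟨Y₁ + Y₂, add_mem hY₁ hY₂, Matrix.map_add _ (map_add _) _ _⟩
  | smul c _ _ h =>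
    obtain ⟨Y, hY, rfl⟩ := h
    obtain ⟨d, rfl⟩ := hres c
    refine ⟨d • Y, Submodule.smul_mem _ d hY, ?_⟩
    ext i j
    simp [Subring.smul_def]

theorem matrixSubmodule_le_span_of_span_map_residue_eq_top [IsLocalRing R] [IsLocalRing R']
    [IsLocalHom R'.subtype] [Fintype m] [Fintype n] [DecidableEq m] [DecidableEq n]
    (hres : Function.Surjective fun x : R' => residue R x) {S : Set (Matrix m n R)}
    (hS : S ⊆ R'.matrixSubmodule m n)
    (hspan : Submodule.span (ResidueField R) ((Matrix.map · (residue R)) '' S) = ⊤) :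
    R'.matrixSubmodule m n ≤ Submodule.span R' S := by
  refine Submodule.le_of_le_smul_of_le_jacobson_bot fg_matrixSubmodule
    (maximalIdeal_le_jacobson _) fun X hX => ?_
  obtain ⟨Y, hY, hYX⟩ := exists_mem_span_map_residue_eq hres (hspan ▸ Submodule.mem_top :
    X.map (residue R) ∈ _)
  have hXY : X - Y ∈ maximalIdeal R' • R'.matrixSubmodule m n := by
    rw [← maximalIdeal_comap R'.subtype]
    refine mem_smul_matrixSubmodule _ (sub_mem hX (Submodule.span_le.mpr hS hY)) fun i j => ?_
    rw [← residue_eq_zero_iff, Matrix.sub_apply, map_sub, sub_eq_zero]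
    exact congrFun (congrFun hYX.symm i) j
  simpa using Submodule.add_mem_sup hY hXY

variable {ι : Type*} [Fintype ι] [DecidableEq ι]

lemma mul_mul_mem_matrixSubmodule_of_le_span {S : Set (Matrix ι ι R)}
    (hS : R'.matrixSubmodule ι ι ≤ Submodule.span R' S) {A B : Matrix ι ι R}
    (h : ∀ s ∈ S, A * s * B ∈ R'.matrixSubmodule ι ι) :
    ∀ X ∈ R'.matrixSubmodule ι ι, A * X * B ∈ R'.matrixSubmodule ι ι := by
  let L := LinearMap.mulRight R' B ∘ₗ LinearMap.mulLeft R' A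
  have hL : Submodule.span R' S ≤ (R'.matrixSubmodule ι ι).comap L := Submodule.span_le.mpr h
  exact fun X hX => hL (hS hX)

lemma nonsing_inv_mem_matrixSubmodule [IsLocalHom R'.subtype] {A : Matrix ι ι R}
    (hA : A ∈ R'.matrixSubmodule ι ι) (hdet : IsUnit A.det) : A⁻¹ ∈ R'.matrixSubmodule ι ι := by
  obtain ⟨A', rfl⟩ : ∃ A' : Matrix ι ι R', A'.map R'.subtype = A :=
    ⟨fun i j => ⟨A i j, hA i j⟩, rfl⟩
  have hdet' : IsUnit A'.det :=
    isUnit_of_map_unit R'.subtype _ (by rwa [RingHom.map_det, RingHom.mapMatrix_apply])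
  have hinv : (A'.map R'.subtype)⁻¹ = A'⁻¹.map R'.subtype := inv_eq_left_inv <| by
    rw [← Matrix.map_mul, nonsing_inv_mul _ hdet', Matrix.map_one _ (map_zero _) (map_one _)]
  rw [hinv]
  exact fun i j => (A'⁻¹ i j).2

theorem exists_smul_mem_matrixSubmodule_of_conj_mem [IsLocalRing R] [IsLocalHom R'.subtype]
    {M : Matrix ι ι R} (hM : IsUnit M)
    (hconj : ∀ X ∈ R'.matrixSubmodule ι ι, M * X * M⁻¹ ∈ R'.matrixSubmodule ι ι) :
    ∃ c : Rˣ, c • M ∈ R'.matrixSubmodule ι ι ∧ (c • M)⁻¹ ∈ R'.matrixSubmodule ι ι := by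
  rcases isEmpty_or_nonempty ι with _ | _
  · exact ⟨1, fun i => isEmptyElim i, fun i => isEmptyElim i⟩
  have hdet : IsUnit M.det := (isUnit_iff_isUnit_det M).mp hM
  obtain ⟨i₀, j₀, hu⟩ := exists_isUnit_apply_of_isUnit hM
  have hinv : (hu.unit⁻¹ • M)⁻¹ ∈ R'.matrixSubmodule ι ι := by
    intro b j
    have := hconj _ (single_mem_matrixSubmodule j₀ b R'.one_mem) i₀ j
    rw [mul_single_mul_apply, mul_one] at this
    simpa [inv_smul' _ _ hdet] using this
  refine ⟨hu.unit⁻¹, ?_, hinv⟩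
  have hdet' : IsUnit (hu.unit⁻¹ • M).det := by
    simpa [isUnit_iff_isUnit_det] using hM.smul hu.unit⁻¹
  simpa [nonsing_inv_nonsing_inv _ hdet'] using
    nonsing_inv_mem_matrixSubmodule hinv (isUnit_nonsing_inv_det _ hdet')

end Subring

end

theorem carayol_descent_of_pairing_general
    (R : Type*) [CommRing R] [IsLocalRing R]
    (R' : Subring R) [IsLocalRing R']
    (hm : Ideal.comap R'.subtype (IsLocalRing.maximalIdeal R) = IsLocalRing.maximalIdeal R')
    (hres : Function.Surjective (fun x : R' => IsLocalRing.residue R (x : R)))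
    (n : ℕ) (Γ : Type*) [Group Γ]
    (ρ : Γ →* (Matrix (Fin n) (Fin n) R)ˣ)
    (hirr : AbsIrred (fun g : Γ => ((ρ g : Matrix (Fin n) (Fin n) R)).map (IsLocalRing.residue R)))
    (ν : Γ →* Rˣ) (hν : ∀ g : Γ, (ν g : R) ∈ R')
    (ε : R)
    (J : (Matrix (Fin n) (Fin n) R)ˣ)
    (hJsym : ((J : Matrix (Fin n) (Fin n) R))ᵀ = ε • (J : Matrix (Fin n) (Fin n) R))
    (hJρ : ∀ g : Γ, ((ρ g : Matrix (Fin n) (Fin n) R))ᵀ * (J : Matrix (Fin n) (Fin n) R) *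
      (ρ g : Matrix (Fin n) (Fin n) R) = (ν g : R) • (J : Matrix (Fin n) (Fin n) R))
    (ρ' : Γ →* (Matrix (Fin n) (Fin n) R)ˣ)
    (hconj : ∃ C : (Matrix (Fin n) (Fin n) R)ˣ, ∀ g : Γ,
      (ρ' g : Matrix (Fin n) (Fin n) R) =
        (C : Matrix (Fin n) (Fin n) R) * (ρ g : Matrix (Fin n) (Fin n) R) *
          (↑C⁻¹ : Matrix (Fin n) (Fin n) R))
    (hent : ∀ (g : Γ) (i j : Fin n), (ρ' g : Matrix (Fin n) (Fin n) R) i j ∈ R') :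
    ∃ J' : (Matrix (Fin n) (Fin n) R)ˣ,
      (∀ i j : Fin n, (J' : Matrix (Fin n) (Fin n) R) i j ∈ R') ∧
      (∀ i j : Fin n, (↑J'⁻¹ : Matrix (Fin n) (Fin n) R) i j ∈ R') ∧
      ((J' : Matrix (Fin n) (Fin n) R))ᵀ = ε • (J' : Matrix (Fin n) (Fin n) R) ∧
      ∀ g : Γ, ((ρ' g : Matrix (Fin n) (Fin n) R))ᵀ * (J' : Matrix (Fin n) (Fin n) R) *
        (ρ' g : Matrix (Fin n) (Fin n) R) = (ν g : R) • (J' : Matrix (Fin n) (Fin n) R) := by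
  obtain ⟨C, hC⟩ := hconj
  have : IsLocalHom R'.subtype := ((local_hom_TFAE R'.subtype).out 0 4).mpr hm
  obtain ⟨M, hMρ', hMsym, hMunit⟩ : ∃ M : Matrix (Fin n) (Fin n) R,
      (∀ g, (ρ' g : Matrix (Fin n) (Fin n) R)ᵀ * M * ρ' g = (ν g : R) • M) ∧ Mᵀ = ε • M ∧
        IsUnit M := by
    refine ⟨(↑C⁻¹ : Matrix (Fin n) (Fin n) R)ᵀ * J * (↑C⁻¹ : Matrix (Fin n) (Fin n) R),
      fun g => hC g ▸ transpose_conj_mul_mul_conj_eq_smul C (hJρ g), ?_, ?_⟩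
    · rw [transpose_mul, transpose_mul, transpose_transpose, hJsym, Matrix.smul_mul,
        Matrix.mul_smul, Matrix.mul_assoc]
    · exact (((isUnit_transpose _).mpr (C⁻¹).isUnit).mul J.isUnit).mul (C⁻¹).isUnit
  have hirr' : AbsIrred fun g => (ρ' g : Matrix (Fin n) (Fin n) R).map (residue R) := by
    convert hirr.conj (Units.map (residue R).mapMatrix.toMonoidHom C) using 2 with g
    simp [hC g, Matrix.map_mul]
  have hspan : R'.matrixSubmodule (Fin n) (Fin n) ≤
      Submodule.span R' (Set.range fun g => (ρ' g : Matrix (Fin n) (Fin n) R)) :=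
    Subring.matrixSubmodule_le_span_of_span_map_residue_eq_top hres
      (Set.range_subset_iff.mpr hent) (by rw [← Set.range_comp]; exact hirr')
  have hstable := Subring.mul_mul_mem_matrixSubmodule_of_le_span hspan (B := M⁻¹) <|
    Set.forall_mem_range.mpr fun g i j => by
      rw [mul_mul_nonsing_inv_eq_smul_transpose ((isUnit_iff_isUnit_det M).mp hMunit)
        ((isUnit_iff_isUnit_det _).mp (ρ' g).isUnit) (hMρ' g), ← coe_units_inv, ← map_inv]
      exact R'.mul_mem (hν g) (hent g⁻¹ j i)
  obtain ⟨c, hcM, hcMinv⟩ := Subring.exists_smul_mem_matrixSubmodule_of_conj_mem hMunit hstable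
  refine ⟨(hMunit.smul c).unit, hcM, by simpa [coe_units_inv] using hcMinv, ?_, fun g => ?_⟩
  · simp [hMsym, smul_comm c ε]
  · simp [hMρ', smul_comm c]

/-- Carayol's lemma for self-dual representations: let `R' ⊆ R` be
complete Noetherian local rings with `m ∩ R' = m'` and equal residue fields, `ρ` a
representation to `GL_n(R)` with residually absolutely irreducible reduction and traces
in `R'`, preserving a perfect bilinear form `J` of sign `ε` up to a similitude `ν` valued
in `R'`. If `ρ'` is a Carayol descent of `ρ` (a conjugate of `ρ` with entries in `R'`),
then `ρ'` preserves a perfect bilinear form of the same type with similitude `ν`,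
defined over `R'`. -/
theorem carayol_descent_of_pairing
    (R : Type*) [CommRing R] [IsNoetherianRing R] [IsLocalRing R]
    [IsAdicComplete (IsLocalRing.maximalIdeal R) R]
    (R' : Subring R) [IsNoetherianRing R'] [IsLocalRing R']
    [IsAdicComplete (IsLocalRing.maximalIdeal R') R']
    (hm : Ideal.comap R'.subtype (IsLocalRing.maximalIdeal R) = IsLocalRing.maximalIdeal R')
    (hres : Function.Surjective (fun x : R' => IsLocalRing.residue R (x : R)))
    (n : ℕ) (Γ : Type*) [Group Γ]
    (ρ : Γ →* (Matrix (Fin n) (Fin n) R)ˣ)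
    (hirr : AbsIrred (fun g : Γ => ((ρ g : Matrix (Fin n) (Fin n) R)).map (IsLocalRing.residue R)))
    (htr : ∀ g : Γ, Matrix.trace (ρ g : Matrix (Fin n) (Fin n) R) ∈ R')
    (ν : Γ →* Rˣ) (hν : ∀ g : Γ, (ν g : R) ∈ R')
    (ε : R) (hε : ε = 1 ∨ ε = -1)
    (J : (Matrix (Fin n) (Fin n) R)ˣ)
    (hJsym : ((J : Matrix (Fin n) (Fin n) R))ᵀ = ε • (J : Matrix (Fin n) (Fin n) R))
    (hJρ : ∀ g : Γ, ((ρ g : Matrix (Fin n) (Fin n) R))ᵀ * (J : Matrix (Fin n) (Fin n) R) *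
      (ρ g : Matrix (Fin n) (Fin n) R) = (ν g : R) • (J : Matrix (Fin n) (Fin n) R))
    (ρ' : Γ →* (Matrix (Fin n) (Fin n) R)ˣ)
    (hconj : ∃ C : (Matrix (Fin n) (Fin n) R)ˣ, ∀ g : Γ,
      (ρ' g : Matrix (Fin n) (Fin n) R) =
        (C : Matrix (Fin n) (Fin n) R) * (ρ g : Matrix (Fin n) (Fin n) R) *
          (↑C⁻¹ : Matrix (Fin n) (Fin n) R))
    (hent : ∀ (g : Γ) (i j : Fin n), (ρ' g : Matrix (Fin n) (Fin n) R) i j ∈ R') :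
    ∃ J' : (Matrix (Fin n) (Fin n) R)ˣ,
      (∀ i j : Fin n, (J' : Matrix (Fin n) (Fin n) R) i j ∈ R') ∧
      (∀ i j : Fin n, (↑J'⁻¹ : Matrix (Fin n) (Fin n) R) i j ∈ R') ∧
      ((J' : Matrix (Fin n) (Fin n) R))ᵀ = ε • (J' : Matrix (Fin n) (Fin n) R) ∧
      ∀ g : Γ, ((ρ' g : Matrix (Fin n) (Fin n) R))ᵀ * (J' : Matrix (Fin n) (Fin n) R) *
        (ρ' g : Matrix (Fin n) (Fin n) R) = (ν g : R) • (J' : Matrix (Fin n) (Fin n) R) :=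
  carayol_descent_of_pairing_general R R' hm hres n Γ ρ hirr ν hν ε J hJsym hJρ ρ' hconj hent
end
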